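/- arXiv:0804.2362 — 2 statements merged into one kernel-verified Lean document; each statement's English description precedes it below -/
import Mathlib

section
/- Fix a k × n matrix M_k with ±1 entries, A ⊂ [n] with |A| = k, and I ⊂ [n] \ A. Expose a random (k+1)-th row with iid uniform ±1 entries. Then P(|Per(M_{A∪{i}})| ≥ |Per(M_A)| for at least |I|/3 values of i ∈ I) ≥ 1 - C exp(-c|I|) for absolute constants C, c > 0. -/
open MeasureTheory

/-- The uniform probability measure on `{-1,+1}^n` sign patterns: this models a random row of
`n` iid uniform `±1` signs. -/
noncomputable def rowMeasure (n : ℕ) : Measure (Fin n → Bool) :=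
  (PMF.uniformOfFintype (Fin n → Bool)).toMeasure

/-- The `±1` sign associated to a boolean. -/
def sgn (b : Bool) : ℝ := if b then 1 else -1

/-- `permOn M A` is the permanent of the square minor of the `m × n` matrix `M` on the columns
in `A` (and all `m` rows), when `A` has exactly `m` elements (and `0` otherwise). -/
noncomputable def permOn {m n : ℕ} (M : Matrix (Fin m) (Fin n) ℝ) (A : Finset (Fin n)) : ℝ :=
  if h : A.card = m then (Matrix.of fun r c => M r ((A.orderIsoOfFin h c : Fin n))).permanent
  else 0

/-- `extendRow M r` appends the row `r` at the bottom of the `k × n` matrix `M`. -/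
def extendRow {k n : ℕ} (M : Matrix (Fin k) (Fin n) ℝ) (r : Fin n → ℝ) :
    Matrix (Fin (k + 1)) (Fin n) ℝ :=
  Matrix.of fun p c => if h : (p : ℕ) < k then M ⟨p, h⟩ c else r c

/-!
Expanding the child permanent along the new row `r` gives
`Per(M_{A ∪ {i}}) = r i * Per(M_A) + Q_i`, where `Q_i` depends on `r` only through its entries
in `A`. So for each `i ∈ I` one of the two values `r i = ±1` makes the child at least as large as
the parent, and which one is decided by the entries outside `I`. Conditionally on those entries,
the events "`r i` takes the good value", `i ∈ I`, are independent fair coins, and the exponential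
moment (Chernoff) bound shows that fewer than `|I|/3` of them occur with probability at most
`(2^{1/3} · 3/4)^{|I|}`.
-/

open Finset

namespace Matrix

variable {R : Type*} [CommSemiring R]

theorem permanent_submatrix_equiv_self {m n : Type*} [DecidableEq m] [Fintype m]
    [DecidableEq n] [Fintype n] (e : n ≃ m) (A : Matrix m m R) :
    (A.submatrix e e).permanent = A.permanent :=
  Fintype.sum_equiv (Equiv.permCongr e) _ _ fun σ =>
    Fintype.prod_equiv e _ _ fun i => by simp [Equiv.permCongr_apply]

theorem permanent_updateCol_add {n : Type*} [DecidableEq n] [Fintype n] (M : Matrix n n R)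
    (j : n) (u v : n → R) :
    (updateCol M j (u + v)).permanent =
      (updateCol M j u).permanent + (updateCol M j v).permanent := by
  have hrest (w : n → R) (σ : Equiv.Perm n) :
      ∏ c ∈ Finset.univ.erase j, updateCol M j w (σ c) c =
        ∏ c ∈ Finset.univ.erase j, M (σ c) c :=
    Finset.prod_congr rfl fun c hc => by simp [Finset.ne_of_mem_erase hc]
  simp only [permanent, ← Finset.mul_prod_erase _ _ (Finset.mem_univ j), updateCol_self,
    Pi.add_apply, add_mul, Finset.sum_add_distrib, hrest]

theorem permanent_updateRow_add {n : Type*} [DecidableEq n] [Fintype n] (M : Matrix n n R)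
    (i : n) (u v : n → R) :
    (updateRow M i (u + v)).permanent =
      (updateRow M i u).permanent + (updateRow M i v).permanent := by
  simp only [← permanent_transpose (updateRow _ _ _), ← updateCol_transpose,
    permanent_updateCol_add]

theorem permanent_eq_of_row_zero_eq_single {k : ℕ} (X : Matrix (Fin (k + 1)) (Fin (k + 1)) R)
    (h : X 0 = Pi.single 0 1) :
    X.permanent = (X.submatrix Fin.succ Fin.succ).permanent := by
  rw [← permanent_transpose, ← permanent_transpose (X.submatrix _ _), permanent, permanent,
    Finset.univ_perm_fin_succ, Finset.sum_map, Fintype.sum_prod_type, Fin.sum_univ_succ,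
    Finset.sum_eq_zero (s := Finset.univ) fun p _ => Finset.sum_eq_zero fun σ _ => ?_, add_zero]
  · simp [Fin.prod_univ_succ, h]
  · simp [Fin.prod_univ_succ, h, Fin.succ_ne_zero p]

theorem permanent_eq_of_row_last_eq_single {k : ℕ} (X : Matrix (Fin (k + 1)) (Fin (k + 1)) R)
    (h : X (Fin.last k) = Pi.single (Fin.last k) 1) :
    X.permanent = (X.submatrix Fin.castSucc Fin.castSucc).permanent := by
  rw [← permanent_submatrix_equiv_self Fin.revPerm, permanent_eq_of_row_zero_eq_single,
    ← permanent_submatrix_equiv_self Fin.revPerm (X.submatrix _ _)]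
  · congr 1
    ext p c
    simp [Fin.rev_succ]
  · ext c
    simp [h, Pi.single_apply, Fin.rev_eq_iff]

end Matrix

section Minors

open Matrix

variable {k n : ℕ}

@[simp]
theorem extendRow_castSucc (M : Matrix (Fin k) (Fin n) ℝ) (r : Fin n → ℝ) (p : Fin k) :
    extendRow M r p.castSucc = M p := by
  ext c
  simp [extendRow]

@[simp]
theorem extendRow_last (M : Matrix (Fin k) (Fin n) ℝ) (r : Fin n → ℝ) :
    extendRow M r (Fin.last k) = r := by
  ext c
  simp [extendRow]

theorem permOn_eq_permanent {m : ℕ} (M : Matrix (Fin m) (Fin n) ℝ) {B : Finset (Fin n)}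
    (e : Fin m ≃ B) : permOn M B = (Matrix.of fun r c => M r (e c)).permanent := by
  have hB : B.card = m := by simpa using (Fintype.card_congr e).symm
  rw [permOn, dif_pos hB, ← permanent_permute_rows (e.trans (B.orderIsoOfFin hB).symm.toEquiv)]
  congr 1
  ext r c
  simp [-Finset.coe_orderIsoOfFin_apply]

theorem permOn_extendRow_congr (M : Matrix (Fin k) (Fin n) ℝ) (B : Finset (Fin n))
    {r r' : Fin n → ℝ} (h : ∀ j ∈ B, r j = r' j) :
    permOn (extendRow M r) B = permOn (extendRow M r') B := by
  unfold permOn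
  split_ifs with hB
  · congr 1
    ext p c
    refine Fin.lastCases ?_ (fun p => ?_) p
    · simpa using h _ (B.orderIsoOfFin hB c).2
    · simp
  · rfl

theorem permOn_extendRow_insert (M : Matrix (Fin k) (Fin n) ℝ) {A : Finset (Fin n)}
    (hA : A.card = k) {i : Fin n} (hi : i ∉ A) (r : Fin n → ℝ) :
    permOn (extendRow M r) (insert i A) =
      r i * permOn M A + permOn (extendRow M (Function.update r i 0)) (insert i A) := by
  let e : Fin (k + 1) ≃ (insert i A : Finset (Fin n)) := finSuccEquivLast.trans
    ((Equiv.optionCongr (A.orderIsoOfFin hA).toEquiv).trans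
      (Finset.subtypeInsertEquivOption hi).symm)
  have he_last : (e (Fin.last k) : Fin n) = i := by simp [e, Finset.subtypeInsertEquivOption]
  have he_castSucc (c : Fin k) : (e c.castSucc : Fin n) = A.orderIsoOfFin hA c := by
    simp [e, Finset.subtypeInsertEquivOption]
  set X := Matrix.of fun p c => extendRow M (Function.update r i 0) p (e c)
  have hrow : Matrix.of (fun p c => extendRow M r p (e c)) =
      updateRow X (Fin.last k) (X (Fin.last k) + r i • Pi.single (Fin.last k) 1) := by
    ext p c
    refine Fin.lastCases ?_ (fun p => ?_) p
    · refine Fin.lastCases ?_ (fun c => ?_) c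
      · simp [X, he_last]
      · have hne : (e c.castSucc : Fin n) ≠ i := fun h => hi (h ▸ he_castSucc c ▸ by simp)
        simp [X, hne, Fin.castSucc_ne_last]
    · simp [X, (Fin.castSucc_lt_last p).ne]
  rw [permOn_eq_permanent _ e, permOn_eq_permanent _ e, hrow, permanent_updateRow_add,
    updateRow_eq_self, permanent_updateRow_smul, permanent_eq_of_row_last_eq_single _
      (updateRow_self ..), permOn, dif_pos hA, add_comm]
  congr 3
  ext p c
  simp [X, (Fin.castSucc_lt_last p).ne, he_castSucc]

end Minors

section GoodSign

variable {k n : ℕ}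

open Classical in
/-- Writing the child permanent as `sgn (b i) * Per(M_A) + Q` (see `permOn_extendRow_insert`),
the sign for which it is at least `|Per(M_A)|` in absolute value. -/
noncomputable def goodSign (M : Matrix (Fin k) (Fin n) ℝ) (A : Finset (Fin n)) (i : Fin n)
    (b : Fin n → Bool) : Bool :=
  decide (|permOn M A| ≤
    |permOn M A + permOn (extendRow M (Function.update (fun j => sgn (b j)) i 0)) (insert i A)|)

theorem abs_permOn_le_of_eq_goodSign (M : Matrix (Fin k) (Fin n) ℝ) {A : Finset (Fin n)}
    (hA : A.card = k) {i : Fin n} (hi : i ∉ A) {b : Fin n → Bool}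
    (hb : b i = goodSign M A i b) :
    |permOn M A| ≤ |permOn (extendRow M fun j => sgn (b j)) (insert i A)| := by
  rw [permOn_extendRow_insert M hA hi]
  rw [goodSign] at hb
  generalize permOn M A = P at hb ⊢
  generalize permOn (extendRow M _) _ = Q at hb ⊢
  cases hbi : b i
  · rw [hbi, eq_comm, decide_eq_false_iff_not, not_le] at hb
    have htri : |(P + Q) - (-P + Q)| ≤ |P + Q| + |-P + Q| := abs_sub _ _
    rw [show P + Q - (-P + Q) = 2 * P by ring, abs_mul, abs_two] at htri
    simp only [sgn, Bool.false_eq_true, if_false, neg_one_mul]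
    linarith
  · rw [hbi, eq_comm, decide_eq_true_iff] at hb
    simpa [sgn] using hb

theorem goodSign_congr (M : Matrix (Fin k) (Fin n) ℝ) {A : Finset (Fin n)} {i : Fin n}
    (hi : i ∉ A) {b b' : Fin n → Bool} (h : ∀ j ∈ A, b j = b' j) :
    goodSign M A i b = goodSign M A i b' := by
  unfold goodSign
  rw [permOn_extendRow_congr M _ fun j hj => ?_]
  rcases Finset.mem_insert.mp hj with rfl | hjA
  · simp
  · simp [Function.update_of_ne (ne_of_mem_of_not_mem hjA hi), h j hjA]

end GoodSign

/-- Since `g` ignores the coordinates in `I`, once the coordinates outside `I` are fixed the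
agreement set `{i ∈ I | b i = g i b}` runs injectively through subsets of `I`. -/
theorem card_filter_agreement_mul_le {ι : Type*} [Fintype ι] [DecidableEq ι] (I : Finset ι)
    (g : ι → (ι → Bool) → Bool)
    (hg : ∀ i ∈ I, ∀ b b' : ι → Bool, (∀ j ∉ I, b j = b' j) → g i b = g i b')
    (p : Finset ι → Prop) [DecidablePred p] :
    #{b | p {i ∈ I | b i = g i b}} * 2 ^ #I ≤
      #{t ∈ I.powerset | p t} * 2 ^ Fintype.card ι := by
  let ψ (b : ι → Bool) : Finset ι × ({j // j ∉ I} → Bool) :=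
    ({i ∈ I | b i = g i b}, fun j => b j)
  have hmaps : ∀ b ∈ ({b | p {i ∈ I | b i = g i b}} : Finset (ι → Bool)),
      ψ b ∈ {t ∈ I.powerset | p t} ×ˢ (univ : Finset ({j // j ∉ I} → Bool)) := by
    intro b hb
    simpa [ψ, filter_subset] using hb
  have hinj : Set.InjOn ψ ({b | p {i ∈ I | b i = g i b}} : Finset (ι → Bool)) := by
    intro b _ b' _ hbb'
    simp only [ψ, Prod.mk.injEq, funext_iff, Subtype.forall] at hbb'
    obtain ⟨hagree, hout⟩ := hbb'
    funext j
    by_cases hj : j ∈ I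
    · have := Finset.ext_iff.mp hagree j
      simp only [mem_filter, hj, true_and, hg j hj b b' hout] at this
      cases hb : b j <;> cases hb' : b' j <;> cases g j b' <;> simp_all
    · exact hout j hj
  have hcard := card_le_card_of_injOn ψ hmaps hinj
  rw [card_product, card_univ, Fintype.card_fun, Fintype.card_subtype_compl, Fintype.card_coe,
    Fintype.card_bool] at hcard
  calc #{b | p {i ∈ I | b i = g i b}} * 2 ^ #I
      ≤ #{t ∈ I.powerset | p t} * 2 ^ (Fintype.card ι - #I) * 2 ^ #I := by gcongr
    _ = #{t ∈ I.powerset | p t} * 2 ^ Fintype.card ι := by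
      rw [mul_assoc, ← pow_add, Nat.sub_add_cancel (card_le_univ I)]

theorem card_powerset_filter_card_le_mul_rpow_le {ι : Type*} (s : Finset ι) (a : ℝ) {x : ℝ}
    (hx₀ : 0 < x) (hx₁ : x ≤ 1) :
    (#{t ∈ s.powerset | (#t : ℝ) ≤ a} : ℝ) * x ^ a ≤ (x + 1) ^ #s := by
  calc (#{t ∈ s.powerset | (#t : ℝ) ≤ a} : ℝ) * x ^ a
      = ∑ t ∈ s.powerset with (#t : ℝ) ≤ a, x ^ a := by simp
    _ ≤ ∑ t ∈ s.powerset with (#t : ℝ) ≤ a, x ^ #t := by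
      gcongr with t ht
      rw [← Real.rpow_natCast]
      exact Real.rpow_le_rpow_of_exponent_ge hx₀ hx₁ (mem_filter.mp ht).2
    _ ≤ ∑ t ∈ s.powerset, x ^ #t :=
      sum_le_sum_of_subset_of_nonneg (filter_subset _ _) fun _ _ _ => by positivity
    _ = (x + 1) ^ #s := by simpa using sum_pow_mul_eq_add_pow x 1 s

instance (n : ℕ) : IsProbabilityMeasure (rowMeasure n) := by
  unfold rowMeasure
  infer_instance

theorem rowMeasure_apply {n : ℕ} (s : Set (Fin n → Bool)) [DecidablePred (· ∈ s)] :
    rowMeasure n s = ENNReal.ofReal (#{b | b ∈ s} / 2 ^ n) := by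
  rw [rowMeasure, PMF.toMeasure_uniformOfFintype_apply _ s.toFinite.measurableSet]
  simp [Fintype.card_subtype, ENNReal.ofReal_div_of_pos, ENNReal.ofReal_pow]

theorem log_two_div_three_lt_log_four_div_three : Real.log 2 / 3 < Real.log (4 / 3) := by
  have h : Real.log 2 < Real.log ((4 / 3) ^ 3) := Real.log_lt_log two_pos (by norm_num)
  rw [Real.log_pow] at h
  push_cast at h
  linarith

theorem exp_neg_mul_mul_two_pow_mul_half_rpow (m : ℕ) :
    Real.exp (-(Real.log (4 / 3) - Real.log 2 / 3) * m) * (2 ^ m * (1 / 2) ^ ((m : ℝ) / 3)) =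
      (3 / 2) ^ m := by
  have hlog : -(Real.log (4 / 3) - Real.log 2 / 3) * m =
      m * Real.log (3 / 4) + Real.log 2 * ((m : ℝ) / 3) := by
    rw [show (3 / 4 : ℝ) = (4 / 3)⁻¹ by norm_num, Real.log_inv]
    ring
  have hhalf : (2 : ℝ) ^ ((m : ℝ) / 3) * (1 / 2) ^ ((m : ℝ) / 3) = 1 := by
    rw [← Real.mul_rpow (by norm_num) (by norm_num)]
    norm_num
  rw [hlog, Real.exp_add, Real.exp_nat_mul, Real.exp_log (by norm_num),
    ← Real.rpow_def_of_pos two_pos]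
  calc (3 / 4 : ℝ) ^ m * 2 ^ ((m : ℝ) / 3) * (2 ^ m * (1 / 2) ^ ((m : ℝ) / 3))
      = (3 / 4 * 2) ^ m * (2 ^ ((m : ℝ) / 3) * (1 / 2) ^ ((m : ℝ) / 3)) := by
        rw [mul_pow]; ring
    _ = (3 / 2) ^ m := by rw [hhalf]; norm_num

theorem rowMeasure_card_filter_agreement_le {n : ℕ} (I : Finset (Fin n))
    (g : Fin n → (Fin n → Bool) → Bool)
    (hg : ∀ i ∈ I, ∀ b b' : Fin n → Bool, (∀ j ∉ I, b j = b' j) → g i b = g i b') :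
    rowMeasure n {b | (#{i ∈ I | b i = g i b} : ℝ) ≤ #I / 3} ≤
      ENNReal.ofReal (Real.exp (-(Real.log (4 / 3) - Real.log 2 / 3) * #I)) := by
  set N := #{b | (#{i ∈ I | b i = g i b} : ℝ) ≤ #I / 3}
  set K := #{t ∈ I.powerset | (#t : ℝ) ≤ #I / 3}
  set h : ℝ := (1 / 2) ^ ((#I : ℝ) / 3)
  have hcount : (N : ℝ) * 2 ^ #I ≤ K * 2 ^ n := by
    exact_mod_cast Fintype.card_fin n ▸
      card_filter_agreement_mul_le I g hg fun t => (#t : ℝ) ≤ #I / 3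
  have hchernoff : K * h ≤ (3 / 2) ^ #I := by
    have := card_powerset_filter_card_le_mul_rpow_le I (#I / 3) (x := 1 / 2) (by norm_num)
      (by norm_num)
    norm_num at this ⊢
    exact this
  rw [rowMeasure_apply]
  refine ENNReal.ofReal_le_ofReal ?_
  simp only [Set.mem_ofPred_eq]
  rw [div_le_iff₀ (by positivity)]
  refine le_of_mul_le_mul_right ?_ (by positivity : (0 : ℝ) < 2 ^ #I * h)
  calc _ = (N : ℝ) * 2 ^ #I * h := by ring
    _ ≤ K * 2 ^ n * h := by gcongr
    _ = K * h * 2 ^ n := by ring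
    _ ≤ (3 / 2) ^ #I * 2 ^ n := by gcongr
    _ = _ := by rw [← exp_neg_mul_mul_two_pow_mul_half_rpow]; ring

open Classical in
/-- Large parent often has many large children: fixing the first `k` rows `M` with `±1`
entries and exposing a random `(k+1)`-th row of iid uniform signs, for `A` of size `k` and
`I ⊆ [n] \ A`, with probability at least `1 - C exp(-c |I|)` (for absolute constants
`C, c > 0`) at least `|I|/3` of the `i ∈ I` satisfy `|Per(M_{A ∪ {i}})| ≥ |Per(M_A)|`. -/
theorem large_parent_many_large_children :
    ∃ C c : ℝ, 0 < C ∧ 0 < c ∧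
      ∀ (k n : ℕ) (M : Matrix (Fin k) (Fin n) ℝ), (∀ p q, M p q = 1 ∨ M p q = -1) →
        ∀ (A : Finset (Fin n)), A.card = k → ∀ (I : Finset (Fin n)), (∀ i ∈ I, i ∉ A) →
          1 - ENNReal.ofReal (C * Real.exp (-c * I.card)) ≤
            rowMeasure n
              {b | (I.card : ℝ) / 3 ≤
                ((I.filter fun i =>
                  |permOn M A| ≤
                    |permOn (extendRow M fun j => sgn (b j)) (insert i A)|).card : ℝ)} := by
  refine ⟨1, Real.log (4 / 3) - Real.log 2 / 3, one_pos,
    sub_pos.mpr log_two_div_three_lt_log_four_div_three, ?_⟩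
  intro k n M _ A hA I hI
  set S : Set (Fin n → Bool) := {b | (#I : ℝ) / 3 ≤
    #{i ∈ I | |permOn M A| ≤ |permOn (extendRow M fun j => sgn (b j)) (insert i A)|}}
  have hbad : Sᶜ ⊆ {b | (#{i ∈ I | b i = goodSign M A i b} : ℝ) ≤ #I / 3} := by
    intro b hb
    simp only [S, Set.mem_compl_iff, Set.mem_ofPred_eq, not_le] at hb ⊢
    refine le_trans ?_ hb.le
    exact_mod_cast card_le_card <| monotone_filter_right I fun i hi =>
      abs_permOn_le_of_eq_goodSign M hA (hI i hi)
  have hSc := (measure_mono hbad).trans <| rowMeasure_card_filter_agreement_le I (goodSign M A)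
    fun i hi b b' h => goodSign_congr M (hI i hi) fun j hj => h j fun hjI => hI j hjI hj
  calc 1 - ENNReal.ofReal (1 * _) ≤ rowMeasure n S + rowMeasure n Sᶜ - rowMeasure n Sᶜ := by
        rw [one_mul]
        exact tsub_le_tsub (by simpa using measure_univ_le_add_compl (μ := rowMeasure n) S) hSc
    _ ≤ rowMeasure n S := ENNReal.add_sub_cancel_right (measure_ne_top _ _) |>.le
end

section
/- Fix the first n-1 rows of an n × n random ±1 matrix and suppose there are at least m sets A ∈ binom([n], n-1) with |Per(M_A)| ≥ μ, where the M_A are the (n-1) × (n-1) minors on the first n-1 rows. Then after exposing the random last row of iid ±1 signs, P(|Per(M_n)| ≥ μ) ≥ 1 - C/√m for an absolute constant C. -/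
/-!
Expanding the permanent along the last row gives `Per(M_n) = ∑ⱼ εⱼ cⱼ`, where `ε` is the random
sign row and `cⱼ` is the permanent of the minor omitting column `j`; by hypothesis at least `N` of
the `cⱼ` satisfy `|cⱼ| ≥ μ`. Erdős' form of the Littlewood–Offord inequality bounds the number of
sign vectors with `|∑ⱼ εⱼ cⱼ| < μ` by `C(N, ⌊N/2⌋) 2^(n-N)`: after flipping signs so that all
`cⱼ ≥ 0`, fixing the signs off the heavy coordinates leaves a family of subsets of the heavy
coordinates that is an antichain, so Sperner's theorem applies. Finally
`C(N, ⌊N/2⌋) √N ≤ 2^N`, so the constant `C = 1` works.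
-/

open MeasureTheory

open Finset

namespace Matrix

variable {R : Type*} [CommSemiring R] {n : ℕ}

theorem permanent_succ_column_zero (A : Matrix (Fin (n + 1)) (Fin (n + 1)) R) :
    A.permanent = ∑ i : Fin (n + 1), A i 0 * (A.submatrix i.succAbove Fin.succ).permanent := by
  rw [permanent, Finset.univ_perm_fin_succ, ← univ_product_univ]
  simp only [sum_map, Equiv.toEmbedding_apply, sum_product]
  refine sum_congr rfl fun i _ => ?_
  have hprod : ∀ σ : Equiv.Perm (Fin n), ∏ x, A (Equiv.Perm.decomposeFin.symm (i, σ) x) x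
      = A i 0 * ∏ x, A (Equiv.swap 0 i (σ x).succ) x.succ := by
    intro σ
    simp [Fin.prod_univ_succ]
  rw [sum_congr rfl fun σ _ => hprod σ, ← mul_sum]
  congr 1
  refine Fin.cases ?_ (fun i => ?_) i
  · simp [permanent]
  · rw [← permanent_permute_cols i.cycleRange (A.submatrix (Fin.succ i).succAbove Fin.succ),
      permanent]
    refine sum_congr rfl fun σ _ => prod_congr rfl fun x _ => ?_
    simp [Fin.succAbove_cycleRange]

theorem permanent_succ_row_zero (A : Matrix (Fin (n + 1)) (Fin (n + 1)) R) :
    A.permanent = ∑ j : Fin (n + 1), A 0 j * (A.submatrix Fin.succ j.succAbove).permanent := by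
  rw [← permanent_transpose A, permanent_succ_column_zero]
  refine sum_congr rfl fun i _ => ?_
  rw [← permanent_transpose]
  simp only [transpose_apply, transpose_submatrix, transpose_transpose]

theorem permanent_succ_row (A : Matrix (Fin (n + 1)) (Fin (n + 1)) R) (i : Fin (n + 1)) :
    A.permanent = ∑ j : Fin (n + 1), A i j * (A.submatrix i.succAbove j.succAbove).permanent := by
  rw [← permanent_permute_cols i.cycleRange⁻¹ A, permanent_succ_row_zero]
  refine sum_congr rfl fun j _ => ?_
  congr 2
  · simp [Equiv.Perm.inv_def, Fin.cycleRange_symm_zero]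
  · ext r c
    simp [Equiv.Perm.inv_def, Fin.cycleRange_symm_succ]

end Matrix

section Minors

variable {m : ℕ}

theorem permOn_univ_erase (M : Matrix (Fin m) (Fin (m + 1)) ℝ) (j : Fin (m + 1)) :
    permOn M (univ.erase j) = (M.submatrix id j.succAbove).permanent := by
  have hcard : #(univ.erase j) = m := by simp
  have horder : ∀ c, ((univ.erase j).orderIsoOfFin hcard c : Fin (m + 1)) = j.succAbove c := by
    intro c
    rw [coe_orderIsoOfFin_apply, ← orderEmbOfFin_unique hcard (f := j.succAbove)
      (fun x => by simp [Fin.succAbove_ne]) (Fin.strictMono_succAbove j)]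
  rw [permOn, dif_pos hcard]
  congr 1
  ext p c
  simp [horder]

theorem permanent_extendRow (M : Matrix (Fin m) (Fin (m + 1)) ℝ) (r : Fin (m + 1) → ℝ) :
    (extendRow M r).permanent = ∑ j, r j * permOn M (univ.erase j) := by
  rw [Matrix.permanent_succ_row _ (Fin.last m)]
  refine sum_congr rfl fun j _ => ?_
  rw [permOn_univ_erase]
  congr 2
  · simp [extendRow]
  · ext p c
    simp [extendRow]

end Minors

theorem card_filter_powersetCard_le {α : Type*} [Fintype α] [DecidableEq α] {k : ℕ}
    (hk : Fintype.card α = k + 1) (P : Finset α → Prop) [DecidablePred P] :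
    #{A ∈ univ.powersetCard k | P A} ≤ #{j | P (univ.erase j)} := by
  refine (card_le_card fun A hA => ?_).trans (card_image_le (f := fun j => univ.erase j))
  rw [mem_filter, mem_powersetCard_univ] at hA
  have hproper : A ⊂ univ := ssubset_univ_iff.mpr fun h => by simp [h, hk] at hA
  obtain ⟨j, -, hAj⟩ := ssubset_iff_exists_subset_erase.mp hproper
  have hA' : A = univ.erase j := eq_of_subset_of_card_le hAj (by simp [hA.1, hk])
  exact mem_image.mpr ⟨j, by simpa [← hA'] using hA.2, hA'.symm⟩

-- The factor `3 k + 1` rather than `k` is what makes the induction step close.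
theorem Nat.centralBinom_sq_mul_le (k : ℕ) : k.centralBinom ^ 2 * (3 * k + 1) ≤ 16 ^ k := by
  induction k with
  | zero => simp
  | succ k ih =>
    have hrec := Nat.succ_mul_centralBinom_succ k
    refine Nat.le_of_mul_le_mul_left ?_ (by positivity : 0 < (k + 1) ^ 2)
    calc (k + 1) ^ 2 * ((k + 1).centralBinom ^ 2 * (3 * (k + 1) + 1))
        = ((k + 1) * (k + 1).centralBinom) ^ 2 * (3 * k + 4) := by ring
      _ = k.centralBinom ^ 2 * (4 * (2 * k + 1) ^ 2 * (3 * k + 4)) := by rw [hrec]; ring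
      _ ≤ k.centralBinom ^ 2 * (16 * (k + 1) ^ 2 * (3 * k + 1)) :=
        Nat.mul_le_mul_left _ (by nlinarith)
      _ = 16 * (k + 1) ^ 2 * (k.centralBinom ^ 2 * (3 * k + 1)) := by ring
      _ ≤ 16 * (k + 1) ^ 2 * 16 ^ k := by gcongr
      _ = (k + 1) ^ 2 * 16 ^ (k + 1) := by ring

theorem Nat.choose_half_sq_mul_le (n : ℕ) : n.choose (n / 2) ^ 2 * n ≤ 4 ^ n := by
  obtain ⟨k, rfl | rfl⟩ := n.even_or_odd'
  · rw [Nat.mul_div_cancel_left k two_pos, ← Nat.centralBinom_eq_two_mul_choose, pow_mul]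
    calc k.centralBinom ^ 2 * (2 * k) ≤ k.centralBinom ^ 2 * (3 * k + 1) := by gcongr; omega
      _ ≤ 16 ^ k := Nat.centralBinom_sq_mul_le k
  · have hdiv : (2 * k + 1) / 2 = k := by omega
    have hhalf : (k + 1).centralBinom = 2 * (2 * k + 1).choose k := by
      rw [Nat.centralBinom_eq_two_mul_choose, show 2 * (k + 1) = 2 * k + 1 + 1 by ring,
        Nat.choose_succ_succ, Nat.choose_symm_half]
      ring
    rw [hdiv]
    refine Nat.le_of_mul_le_mul_left ?_ (by norm_num : 0 < 4)
    calc 4 * ((2 * k + 1).choose k ^ 2 * (2 * k + 1))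
        = (k + 1).centralBinom ^ 2 * (2 * k + 1) := by rw [hhalf]; ring
      _ ≤ (k + 1).centralBinom ^ 2 * (3 * (k + 1) + 1) := by gcongr _ * ?_; omega
      _ ≤ 16 ^ (k + 1) := Nat.centralBinom_sq_mul_le (k + 1)
      _ = 4 * 4 ^ (2 * k + 1) := by rw [pow_succ, pow_succ, pow_mul]; norm_num; ring

theorem Nat.choose_half_mul_sqrt_le (n : ℕ) : (n.choose (n / 2) : ℝ) * √n ≤ 2 ^ n := by
  rw [← Real.sqrt_sq (by positivity : (0 : ℝ) ≤ n.choose (n / 2)), ← Real.sqrt_mul (by positivity),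
    ← Real.sqrt_sq (by positivity : (0 : ℝ) ≤ 2 ^ n)]
  gcongr
  rw [← pow_mul, mul_comm n 2, pow_mul]
  norm_num
  exact_mod_cast Nat.choose_half_sq_mul_le n

section LittlewoodOfford

variable {κ : Type*} [Fintype κ]

theorem sum_sgn_mul_eq_two_mul_sum_filter_sub (f : κ → Bool) (a : κ → ℝ) :
    ∑ x, sgn (f x) * a x = 2 * ∑ x with f x = true, a x - ∑ x, a x := by
  rw [sum_filter, mul_sum, ← sum_sub_distrib]
  refine sum_congr rfl fun x _ => ?_
  cases f x <;> simp [sgn]; ring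

theorem card_abs_sum_sgn_mul_add_lt_le_choose [DecidableEq κ] {a : κ → ℝ} {μ : ℝ}
    (ha : ∀ x, μ ≤ a x) (r : ℝ) :
    #{f : κ → Bool | |∑ x, sgn (f x) * a x + r| < μ} ≤
      (Fintype.card κ).choose (Fintype.card κ / 2) := by
  set Bad : Finset (κ → Bool) := {f | |∑ x, sgn (f x) * a x + r| < μ}
  set support : (κ → Bool) → Finset κ := fun f => {x | f x = true}
  have hinj : Set.InjOn support Bad := fun f _ g _ hfg =>
    funext fun x => Bool.eq_iff_iff.mpr (by simpa [support] using congrArg (x ∈ ·) hfg)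
  have hanti : IsAntichain (· ⊆ ·) (SetLike.coe (Bad.image support)) := by
    rintro _ hs _ ht hne hst
    obtain ⟨f, hf, rfl⟩ := mem_image.mp hs
    obtain ⟨g, hg, rfl⟩ := mem_image.mp ht
    obtain ⟨x, hxg, hxf⟩ := exists_of_ssubset (lt_of_le_of_ne hst hne)
    simp only [Bad, mem_filter, mem_univ, true_and, sum_sgn_mul_eq_two_mul_sum_filter_sub] at hf hg
    have hμ : 0 < μ := (abs_nonneg _).trans_lt hf
    -- passing from `f` to `g` raises the sum by `2 ∑_{support g \ support f} a ≥ 2 μ`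
    have hgap : μ ≤ ∑ y ∈ support g \ support f, a y :=
      (ha x).trans (single_le_sum (fun y _ => hμ.le.trans (ha y)) (mem_sdiff.mpr ⟨hxg, hxf⟩))
    rw [← sum_sdiff hst] at hg
    rw [abs_lt] at hf hg
    linarith [hf.1, hg.2]
  calc #Bad = #(Bad.image support) := (card_image_of_injOn hinj).symm
    _ ≤ _ := hanti.sperner

variable {ι : Type*} [Fintype ι] [DecidableEq ι]

theorem card_filter_sum_sgn_mul_eq_abs (c : ι → ℝ) (P : ℝ → Prop) [DecidablePred P] :
    #{b : ι → Bool | P (∑ j, sgn (b j) * c j)} = #{b : ι → Bool | P (∑ j, sgn (b j) * |c j|)} := by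
  set flip : (ι → Bool) → ι → Bool := fun b j => xor (b j) (decide (c j < 0))
  have hflip : Function.Involutive flip := fun b => funext fun j => by simp [flip]
  have hterm : ∀ b j, sgn (flip b j) * |c j| = sgn (b j) * c j := by
    intro b j
    rcases lt_or_ge (c j) 0 with hc | hc
    · cases hb : b j <;> simp [flip, sgn, hb, hc, abs_of_neg hc]
    · cases hb : b j <;> simp [flip, sgn, hb, hc.not_gt, abs_of_nonneg hc]
  exact card_equiv hflip.toPerm fun b => by simp [hterm]

theorem card_abs_sum_sgn_mul_lt_le_of_le (a : ι → ℝ) {μ : ℝ} (S : Finset ι)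
    (hS : ∀ j ∈ S, μ ≤ a j) :
    #{b : ι → Bool | |∑ j, sgn (b j) * a j| < μ} ≤
      (#S).choose (#S / 2) * 2 ^ (Fintype.card ι - #S) := by
  set Bad : Finset (ι → Bool) := {b | |∑ j, sgn (b j) * a j| < μ}
  set outside : (ι → Bool) → ({j // j ∉ S} → Bool) := fun b j => b j
  have hsplit : ∀ b : ι → Bool, ∑ j, sgn (b j) * a j =
      ∑ x : S, sgn (b x) * a x + ∑ j : {j // j ∉ S}, sgn (outside b j) * a j := fun b => by
    convert (Fintype.sum_subtype_add_sum_subtype (· ∈ S) _).symm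
  have hfiber : ∀ g, #{b ∈ Bad | outside b = g} ≤ (#S).choose (#S / 2) := by
    intro g
    set r := ∑ j : {j // j ∉ S}, sgn (g j) * a j
    calc #{b ∈ Bad | outside b = g}
        ≤ #{f : S → Bool | |∑ x, sgn (f x) * a x + r| < μ} := by
          refine card_le_card_of_injOn (fun b x => b x) (fun b hb => ?_) fun b hb b' hb' hbb' => ?_
          · simp only [Bad, coe_filter, mem_filter, mem_univ, true_and, Set.mem_ofPred_eq] at hb ⊢
            rw [hsplit, hb.2] at hb
            exact hb.1
          · simp only [Bad, coe_filter, mem_filter, Set.mem_ofPred_eq] at hb hb'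
            funext j
            by_cases hj : j ∈ S
            · exact congrFun hbb' ⟨j, hj⟩
            · exact (congrFun hb.2 ⟨j, hj⟩).trans (congrFun hb'.2 ⟨j, hj⟩).symm
      _ ≤ (#S).choose (#S / 2) := by
          simpa using card_abs_sum_sgn_mul_add_lt_le_choose (fun x : S => hS x x.2) r
  calc #Bad ≤ (#S).choose (#S / 2) * #(univ : Finset ({j // j ∉ S} → Bool)) :=
        card_le_mul_card_image_of_maps_to (fun _ _ => mem_univ _) _ fun g _ => hfiber g
    _ = (#S).choose (#S / 2) * 2 ^ (Fintype.card ι - #S) := by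
        simp [Fintype.card_subtype_compl]

theorem card_abs_sum_sgn_mul_lt_le (c : ι → ℝ) {μ : ℝ} (S : Finset ι)
    (hS : ∀ j ∈ S, μ ≤ |c j|) :
    #{b : ι → Bool | |∑ j, sgn (b j) * c j| < μ} ≤
      (#S).choose (#S / 2) * 2 ^ (Fintype.card ι - #S) := by
  rw [card_filter_sum_sgn_mul_eq_abs c (|·| < μ)]
  exact card_abs_sum_sgn_mul_lt_le_of_le _ S hS

end LittlewoodOfford

instance inst_s18 (n : ℕ) : IsProbabilityMeasure (rowMeasure n) := PMF.toMeasure.isProbabilityMeasure _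

theorem rowMeasure_coe_finset (n : ℕ) (s : Finset (Fin n → Bool)) :
    rowMeasure n s = #s / 2 ^ n := by
  rw [rowMeasure, PMF.toMeasure_apply_finset]
  simp [PMF.uniformOfFintype_apply, div_eq_mul_inv]

theorem div_two_pow_le_one_div_sqrt_of_le_choose_half_mul {k N n : ℕ} (hN : 0 < N) (hNn : N ≤ n)
    (hk : k ≤ N.choose (N / 2) * 2 ^ (n - N)) :
    (k : ENNReal) / 2 ^ n ≤ ENNReal.ofReal (1 / √N) := by
  have hreal : (k : ℝ) ≤ 1 / √N * 2 ^ n := by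
    rw [one_div_mul_eq_div, le_div_iff₀ (Real.sqrt_pos.2 (mod_cast hN))]
    calc (k : ℝ) * √N ≤ (N.choose (N / 2) * 2 ^ (n - N) : ℕ) * √N := by gcongr
      _ = N.choose (N / 2) * √N * 2 ^ (n - N) := by push_cast; ring
      _ ≤ 2 ^ N * 2 ^ (n - N) := by gcongr; exact Nat.choose_half_mul_sqrt_le N
      _ = 2 ^ n := by rw [← pow_add, Nat.add_sub_cancel' hNn]
  refine ENNReal.div_le_of_le_mul ?_
  calc (k : ENNReal) = ENNReal.ofReal k := (ENNReal.ofReal_natCast k).symm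
    _ ≤ ENNReal.ofReal (1 / √N * 2 ^ n) := ENNReal.ofReal_le_ofReal hreal
    _ = ENNReal.ofReal (1 / √N) * 2 ^ n := by
      rw [ENNReal.ofReal_mul (by positivity), ENNReal.ofReal_pow zero_le_two, ENNReal.ofReal_ofNat]

open Classical in
/-- Final step: there is an absolute constant `C > 0` such that if, for the fixed first `n - 1`
rows `M` of an `n × n` `±1` matrix (here `n = m + 1`), at least `N` of the
`(n-1)`-column minors are `μ`-heavy, then after exposing the random last row of iid uniform
signs the permanent of the full matrix satisfies `|Per(M_n)| ≥ μ` with probability at least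
`1 - C / √N`. -/
theorem last_row_elo :
    ∃ C : ℝ, 0 < C ∧
      ∀ (m N : ℕ) (mu : ℝ) (M : Matrix (Fin m) (Fin (m + 1)) ℝ),
        0 < mu → 1 ≤ N →
        (∀ p q, M p q = 1 ∨ M p q = -1) →
        (N : ℝ) ≤ (((Finset.univ : Finset (Fin (m + 1))).powersetCard m |>.filter
          fun A => mu ≤ |permOn M A|).card : ℝ) →
        1 - ENNReal.ofReal (C / Real.sqrt N) ≤
          rowMeasure (m + 1)
            {b | mu ≤ |(extendRow M fun j => sgn (b j)).permanent|} := by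
  refine ⟨1, one_pos, fun m N mu M _ hN _ hheavy => ?_⟩
  set c : Fin (m + 1) → ℝ := fun j => permOn M (univ.erase j)
  have hNheavy : N ≤ #{j | mu ≤ |c j|} := by
    have := card_filter_powersetCard_le (Fintype.card_fin (m + 1)) fun A => mu ≤ |permOn M A|
    convert (Nat.cast_le.mp hheavy).trans this
  obtain ⟨S, hS, rfl⟩ := exists_subset_card_eq hNheavy
  have hgood : {b : Fin (m + 1) → Bool | mu ≤ |(extendRow M fun j => sgn (b j)).permanent|} =
      (({b | |∑ j, sgn (b j) * c j| < mu} : Finset (Fin (m + 1) → Bool)) : Set _)ᶜ := by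
    ext b
    simp [permanent_extendRow, c]
  rw [hgood, prob_compl_eq_one_sub (Finset.measurableSet _), rowMeasure_coe_finset]
  gcongr
  exact div_two_pow_le_one_div_sqrt_of_le_choose_half_mul hN
    (card_le_univ S |>.trans_eq (Fintype.card_fin _))
    (by simpa using card_abs_sum_sgn_mul_lt_le c S fun j hj => (mem_filter.mp (hS hj)).2)
end
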